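/- arXiv:1709.02137 — 3 statements merged into one kernel-verified Lean document; each statement's English description precedes it below -/
import Mathlib

section
/- Let n ≥ 1 and let ξ₁, …, ξₙ be cyclically interchangeable random variables taking values in the set of integers {…, −3, −2, −1, 0, 1} (i.e. integer-valued with ξᵢ ≤ 1 almost surely). Let R(i) = ξ₁ + ⋯ + ξᵢ for 1 ≤ i ≤ n and R(0) = 0. Then for every integer k with 0 ≤ k ≤ n such that P(R(n) = k) > 0, the conditional probability P(R(i) > 0 for every 1 ≤ i ≤ n | R(n) = k) equals k/n. -/
/-!
Extend the increments periodically and let `S` be their partial sums, so `S (m + n) = S m + k`.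
The rotation starting at `r` stays positive iff `S r < S j` for all `j > r`, i.e. iff
`S r < M (r + 1)`, where `M r = min_{j ≥ r} S j`. Since the increments are at most `1`,
`M (r + 1) - M r` is `1` at such `r` and `0` elsewhere, so the number of good rotations
telescopes to `M n - M 0 = k`. Cyclic interchangeability makes the `n` rotated events
equiprobable, hence `n · P(positive, R n = k) = k · P(R n = k)`.
-/

open Finset MeasureTheory ProbabilityTheory

section SkipFreeWalk

variable {S : ℕ → ℤ} {n : ℕ} {k : ℤ}

-- `min_{j ≥ r} S j`; it is attained under the hypotheses of `isLeast_futureMin`, and is a junk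
-- `sInf` otherwise.
noncomputable def futureMin (S : ℕ → ℤ) (r : ℕ) : ℤ := sInf (S '' Set.Ici r)

theorem le_of_forall_le_of_period (hn : 0 < n) (hk : 0 ≤ k) (hper : ∀ m, S (m + n) = S m + k)
    {r : ℕ} {c : ℤ} (hc : ∀ i < n, c ≤ S (r + i)) (m : ℕ) (hm : r ≤ m) : c ≤ S m := by
  induction m using Nat.strong_induction_on with
  | _ m ih =>
    rcases lt_or_ge m (r + n) with h | h
    · simpa [Nat.add_sub_cancel' hm] using hc (m - r) (by omega)
    · have hprev := ih (m - n) (by omega) (by omega)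
      have hshift := hper (m - n)
      rw [Nat.sub_add_cancel (by omega)] at hshift
      omega

theorem isLeast_futureMin (hn : 0 < n) (hk : 0 ≤ k) (hper : ∀ m, S (m + n) = S m + k) (r : ℕ) :
    IsLeast (S '' Set.Ici r) (futureMin S r) := by
  obtain ⟨i, -, hi⟩ :=
    (range n).exists_min_image (fun i => S (r + i)) (nonempty_range_iff.2 hn.ne')
  have hleast : IsLeast (S '' Set.Ici r) (S (r + i)) :=
    ⟨⟨r + i, by simp, rfl⟩, by
      rintro _ ⟨m, hm, rfl⟩
      exact le_of_forall_le_of_period hn hk hper (fun j hj => hi j (mem_range.2 hj)) m hm⟩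
  rwa [futureMin, hleast.csInf_eq]

theorem futureMin_eq_min (hn : 0 < n) (hk : 0 ≤ k) (hper : ∀ m, S (m + n) = S m + k) (r : ℕ) :
    futureMin S r = min (S r) (futureMin S (r + 1)) := by
  have hIci : Set.Ici r = insert r (Set.Ici (r + 1)) := by
    ext m; simp only [Set.mem_Ici, Set.mem_insert_iff]; omega
  refine (isLeast_futureMin hn hk hper r).unique ?_
  rw [hIci, Set.image_insert_eq]
  exact (isLeast_futureMin hn hk hper (r + 1)).insert (S r)

theorem futureMin_add_period (hn : 0 < n) (hk : 0 ≤ k) (hper : ∀ m, S (m + n) = S m + k)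
    (r : ℕ) : futureMin S (r + n) = futureMin S r + k := by
  obtain ⟨⟨m, hm, hmin⟩, hlow⟩ := isLeast_futureMin hn hk hper r
  refine (isLeast_futureMin hn hk hper (r + n)).unique ⟨⟨m + n, ?_, by rw [hper, hmin]⟩, ?_⟩
  · simpa using hm
  · rintro _ ⟨j, hj, rfl⟩
    have hshift := hper (j - n)
    rw [Nat.sub_add_cancel (by simp at hj; omega)] at hshift
    have := hlow ⟨j - n, by simp at hj ⊢; omega, rfl⟩
    omega

theorem lt_futureMin_succ_iff (hn : 0 < n) (hk : 0 ≤ k) (hper : ∀ m, S (m + n) = S m + k)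
    (r : ℕ) : S r < futureMin S (r + 1) ↔ ∀ i, 1 ≤ i → i ≤ n → S r < S (r + i) := by
  constructor
  · intro h i hi _
    exact h.trans_le ((isLeast_futureMin hn hk hper (r + 1)).2 ⟨r + i, by simp; omega, rfl⟩)
  · intro h
    obtain ⟨m, hm, hmin⟩ := (isLeast_futureMin hn hk hper (r + 1)).1
    rw [← hmin, ← Int.add_one_le_iff]
    refine le_of_forall_le_of_period hn hk hper (fun i hi => ?_) m hm
    simpa [add_assoc, add_comm 1] using h (i + 1) (by omega) (by omega)

theorem futureMin_succ_sub_futureMin (hn : 0 < n) (hk : 0 ≤ k)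
    (hper : ∀ m, S (m + n) = S m + k) (hstep : ∀ m, S (m + 1) ≤ S m + 1) (r : ℕ) :
    futureMin S (r + 1) - futureMin S r = if S r < futureMin S (r + 1) then 1 else 0 := by
  have hle := (isLeast_futureMin hn hk hper (r + 1)).2 ⟨r + 1, Set.self_mem_Ici, rfl⟩
  have := hstep r
  rw [futureMin_eq_min hn hk hper r]
  split_ifs <;> omega

open Classical in
theorem card_filter_forall_lt_eq (hn : 0 < n) (hk : 0 ≤ k) (hper : ∀ m, S (m + n) = S m + k)
    (hstep : ∀ m, S (m + 1) ≤ S m + 1) :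
    (#{r ∈ range n | ∀ i, 1 ≤ i → i ≤ n → S r < S (r + i)} : ℤ) = k := by
  simp_rw [natCast_card_filter, ← lt_futureMin_succ_iff hn hk hper,
    ← futureMin_succ_sub_futureMin hn hk hper hstep, sum_range_sub]
  have := futureMin_add_period hn hk hper 0
  rw [zero_add] at this
  omega

end SkipFreeWalk

section CyclicSums

open Fin.NatCast

variable {n : ℕ}

def prefixSum (x : Fin n → ℤ) (i : ℕ) : ℤ := ∑ j : Fin n, if (j : ℕ) < i then x j else 0

def positivePaths (n : ℕ) : Set (Fin n → ℤ) := {y | ∀ i, 1 ≤ i → i ≤ n → 0 < prefixSum y i}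

def cyclicPartialSum [NeZero n] (x : Fin n → ℤ) (m : ℕ) : ℤ := ∑ j ∈ range m, x j

theorem prefixSum_eq_sum_range [NeZero n] (x : Fin n → ℤ) {i : ℕ} (hi : i ≤ n) :
    prefixSum x i = ∑ j ∈ range i, x j := by
  have hfilter : {j ∈ range n | j < i} = range i := by
    ext j; simp only [mem_filter, mem_range]; omega
  rw [prefixSum, ← hfilter, sum_filter]
  simpa using Fin.sum_univ_eq_sum_range (fun j => if j < i then x j else 0) n

theorem prefixSum_self (x : Fin n → ℤ) : prefixSum x n = ∑ j, x j := by
  simp [prefixSum]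

theorem cyclicPartialSum_add_period [NeZero n] (x : Fin n → ℤ) (m : ℕ) :
    cyclicPartialSum x (m + n) = cyclicPartialSum x m + ∑ j, x j := by
  rw [add_comm, add_comm (cyclicPartialSum x m), cyclicPartialSum, sum_range_add,
    ← prefixSum_self, prefixSum_eq_sum_range x le_rfl]
  simp [cyclicPartialSum]

theorem cyclicPartialSum_succ_le [NeZero n] {x : Fin n → ℤ} (hx : ∀ j, x j ≤ 1) (m : ℕ) :
    cyclicPartialSum x (m + 1) ≤ cyclicPartialSum x m + 1 := by
  rw [cyclicPartialSum, sum_range_succ]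
  exact (add_le_add_iff_left _).2 (hx _)

theorem prefixSum_rotate [NeZero n] (x : Fin n → ℤ) (r : Fin n) {i : ℕ} (hi : i ≤ n) :
    prefixSum (fun j => x (j + r)) i = cyclicPartialSum x (r + i) - cyclicPartialSum x r := by
  simp only [prefixSum_eq_sum_range _ hi, cyclicPartialSum, sum_range_add, add_sub_cancel_left]
  simp [add_comm]

open Classical in
theorem card_rotate_mem_positivePaths [NeZero n] {x : Fin n → ℤ} (hx : ∀ j, x j ≤ 1) {k : ℕ}
    (hsum : ∑ j, x j = k) : #{r : Fin n | (fun j => x (j + r)) ∈ positivePaths n} = k := by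
  have hper := cyclicPartialSum_add_period x
  rw [hsum] at hper
  have hcount := card_filter_forall_lt_eq (NeZero.pos n) (Int.natCast_nonneg k) hper
    (cyclicPartialSum_succ_le hx)
  rw [natCast_card_filter, ← Fin.sum_univ_eq_sum_range] at hcount
  have hgood (r : Fin n) : (fun j => x (j + r)) ∈ positivePaths n ↔
      ∀ i, 1 ≤ i → i ≤ n → cyclicPartialSum x r < cyclicPartialSum x (r + i) := by
    refine forall_congr' fun i => imp_congr_right fun _ => forall_congr' fun hi => ?_
    rw [prefixSum_rotate x r hi, sub_pos]
  have : (#{r : Fin n | (fun j => x (j + r)) ∈ positivePaths n} : ℤ) = k := by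
    rw [natCast_card_filter, ← hcount]
    exact sum_congr rfl fun r _ => by simp only [hgood r]; congr
  exact_mod_cast this

end CyclicSums

section Measure

variable {Ω : Type*} [MeasurableSpace Ω] {μ : Measure Ω}

open Classical in
theorem sum_measure_eq_mul_of_ae_card {ι : Type*} [Fintype ι] {E : ι → Set Ω} {F : Set Ω}
    (hE : ∀ r, MeasurableSet (E r)) (hF : MeasurableSet F) (k : ℕ)
    (hcard : ∀ᵐ ω ∂μ, ω ∈ F → #{r | ω ∈ E r} = k) (hEF : ∀ r, E r ⊆ F) :
    ∑ r, μ (E r) = k * μ F := by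
  have hpoint : ∀ᵐ ω ∂μ, ∑ r, (E r).indicator 1 ω = F.indicator (fun _ => (k : ENNReal)) ω := by
    filter_upwards [hcard] with ω hω
    by_cases hωF : ω ∈ F
    · simp [Set.indicator_apply, hω hωF, hωF]
    · simp [hωF, fun r => Set.notMem_subset (hEF r) hωF]
  calc ∑ r, μ (E r) = ∑ r, ∫⁻ ω, (E r).indicator 1 ω ∂μ := by
        simp only [lintegral_indicator_one (hE _)]
    _ = ∫⁻ ω, F.indicator (fun _ => (k : ENNReal)) ω ∂μ := by
        rw [← lintegral_finsetSum _ fun r _ => measurable_one.indicator (hE r)]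
        exact lintegral_congr_ae hpoint
    _ = k * μ F := lintegral_indicator_const hF _

theorem natCast_mul_measure_positivePaths_inter {n : ℕ} [NeZero n] {X : Ω → Fin n → ℤ}
    (hX : Measurable X) (hbound : ∀ᵐ ω ∂μ, ∀ j, X ω j ≤ 1)
    (hcyc : ∀ r : Fin n, μ.map (fun ω j => X ω (j + r)) = μ.map X) (k : ℕ) :
    n * μ (X ⁻¹' (positivePaths n ∩ {y | ∑ j, y j = k})) = k * μ (X ⁻¹' {y | ∑ j, y j = k}) := by
  set A := positivePaths n
  set B : Set (Fin n → ℤ) := {y | ∑ j, y j = k}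
  have hmeasSet (s : Set (Fin n → ℤ)) : MeasurableSet s := s.to_countable.measurableSet
  let rot (r : Fin n) (y : Fin n → ℤ) : Fin n → ℤ := fun j => y (j + r)
  have hrotB (r : Fin n) : rot r ⁻¹' B = B := by
    ext y
    change ∑ j, y (Equiv.addRight r j) = _ ↔ _
    rw [Equiv.sum_comp]
    rfl
  have hinv (r : Fin n) : μ (X ⁻¹' (rot r ⁻¹' (A ∩ B))) = μ (X ⁻¹' (A ∩ B)) := by
    rw [← Set.preimage_comp, ← Measure.map_apply (by fun_prop) (hmeasSet _),
      ← Measure.map_apply hX (hmeasSet _)]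
    exact congrArg (· (A ∩ B)) (hcyc r)
  calc (n : ENNReal) * μ (X ⁻¹' (A ∩ B)) = ∑ r, μ (X ⁻¹' (rot r ⁻¹' (A ∩ B))) := by
        simp only [hinv, sum_const, card_univ, Fintype.card_fin, nsmul_eq_mul]
    _ = k * μ (X ⁻¹' B) := ?_
  refine sum_measure_eq_mul_of_ae_card (fun r => hX (hmeasSet _)) (hX (hmeasSet _)) k ?_
    fun r => Set.preimage_mono (by rw [Set.preimage_inter, hrotB]; exact Set.inter_subset_right)
  filter_upwards [hbound] with ω hω hωB
  convert card_rotate_mem_positivePaths hω hωB using 3 with r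
  rw [Set.preimage_inter, hrotB]
  exact and_iff_left hωB

end Measure

theorem ballot_cyclically_interchangeable_general
    {Ω : Type*} [MeasurableSpace Ω] (μ : Measure Ω) [IsProbabilityMeasure μ]
    (n : ℕ) (hn : 1 ≤ n) (ξ : Fin n → Ω → ℤ)
    (hmeas : ∀ i, Measurable (ξ i))
    (hbound : ∀ i, ∀ᵐ ω ∂μ, ξ i ω ≤ 1)
    (hcyc : ∀ r : Fin n,
      Measure.map (fun ω => fun i : Fin n => ξ (i + r) ω) μ
        = Measure.map (fun ω => fun i : Fin n => ξ i ω) μ)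
    (R : ℕ → Ω → ℤ)
    (hR : ∀ i ω, R i ω = ∑ j : Fin n, if (j : ℕ) < i then ξ j ω else 0)
    (k : ℕ)
    (hpos : μ {ω | R n ω = (k : ℤ)} ≠ 0) :
    μ[{ω | ∀ i : ℕ, 1 ≤ i → i ≤ n → 0 < R i ω} | {ω | R n ω = (k : ℤ)}]
      = (k : ENNReal) / (n : ENNReal) := by
  have : NeZero n := ⟨by omega⟩
  set X : Ω → Fin n → ℤ := fun ω j => ξ j ω
  have hX : Measurable X := measurable_pi_lambda _ hmeas
  have hsum : {ω | R n ω = k} = X ⁻¹' {y | ∑ j, y j = k} := by ext ω; simp [hR, X]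
  have hpath : {ω | ∀ i, 1 ≤ i → i ≤ n → 0 < R i ω} = X ⁻¹' positivePaths n := by
    ext ω; simp [hR, X, positivePaths, prefixSum]
  have hkey := natCast_mul_measure_positivePaths_inter hX (ae_all_iff.2 hbound) hcyc k
  rw [hsum] at hpos
  rw [hpath, hsum, cond_apply (hX (Set.to_countable _).measurableSet), ← Set.preimage_inter,
    Set.inter_comm, ← ENNReal.div_eq_inv_mul,
    ENNReal.div_eq_div_iff (Nat.cast_ne_zero.2 (NeZero.ne n)) (ENNReal.natCast_ne_top n) hpos
      (measure_ne_top _ _), hkey, mul_comm]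

/-- Ballot-type theorem (Dwass/Takács): for a walk with cyclically interchangeable
increments taking values in `{…, -2, -1, 0, 1}`, conditionally on `R n = k`
(with `0 ≤ k ≤ n`), the probability that the walk stays strictly positive up to
time `n` is `k / n`. -/
theorem ballot_cyclically_interchangeable
    {Ω : Type*} [MeasurableSpace Ω] (μ : Measure Ω) [IsProbabilityMeasure μ]
    (n : ℕ) (hn : 1 ≤ n) (ξ : Fin n → Ω → ℤ)
    (hmeas : ∀ i, Measurable (ξ i))
    (hbound : ∀ i, ∀ᵐ ω ∂μ, ξ i ω ≤ 1)
    (hcyc : ∀ r : Fin n,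
      Measure.map (fun ω => fun i : Fin n => ξ (i + r) ω) μ
        = Measure.map (fun ω => fun i : Fin n => ξ i ω) μ)
    (R : ℕ → Ω → ℤ)
    (hR : ∀ i ω, R i ω = ∑ j : Fin n, if (j : ℕ) < i then ξ j ω else 0)
    (k : ℕ) (hk : k ≤ n)
    (hpos : μ {ω | R n ω = (k : ℤ)} ≠ 0) :
    μ[{ω | ∀ i : ℕ, 1 ≤ i → i ≤ n → 0 < R i ω} | {ω | R n ω = (k : ℤ)}]
      = (k : ENNReal) / (n : ENNReal) :=
  ballot_cyclically_interchangeable_general μ n hn ξ hmeas hbound hcyc R hR k hpos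
end

section
/- Let t ≥ 1 be a natural number and let φ : ℕ → ℕ be a nondecreasing function with φ(0) = 0 satisfying φ(t + u) = φ(t) + φ(u) for all u ∈ ℕ. For u ∈ ℕ define δ(u) = 1 if v − φ(v) > u − φ(u) for every v > u, and δ(u) = 0 otherwise. Then the sum δ(1) + δ(2) + ⋯ + δ(t) equals t − φ(t) if 0 ≤ φ(t) ≤ t, and equals 0 if φ(t) ≥ t. -/
/-!
Put `f u = u - φ u`. Additivity gives the drift `f (u + t) = f u + (t - φ t)`, and monotonicity
of `φ` gives `f (u + 1) ≤ f u + 1`. Since `f` climbs by at most one per step, the tail minimum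
`m u = min_{v ≥ u} f v` satisfies `m (u + 1) = m u + δ u`, so `δ 1 + ⋯ + δ t` telescopes to
`m (t + 1) - m 1`, which the drift makes equal to `t - φ t` when this is nonnegative.
When `t - φ t ≤ 0`, the drift gives `f (u + t) ≤ f u`, so no `u` is counted.
-/

namespace Takacs

noncomputable def tailMin (f : ℕ → ℤ) (u : ℕ) : ℤ := sInf (f '' Set.Ici u)

variable {f : ℕ → ℤ}

lemma tailMin_le (hf : BddBelow (Set.range f)) {u v : ℕ} (huv : u ≤ v) : tailMin f u ≤ f v :=
  csInf_le (hf.mono (Set.image_subset_range _ _)) ⟨v, huv, rfl⟩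

lemma exists_eq_tailMin (hf : BddBelow (Set.range f)) (u : ℕ) :
    ∃ v, u ≤ v ∧ f v = tailMin f u :=
  Int.csInf_mem (Set.nonempty_Ici.image f) (hf.mono (Set.image_subset_range _ _))

lemma le_tailMin {u : ℕ} {b : ℤ} (h : ∀ v, u ≤ v → b ≤ f v) : b ≤ tailMin f u :=
  le_csInf (Set.nonempty_Ici.image f) (by rintro _ ⟨v, hv, rfl⟩; exact h v hv)

lemma tailMin_eq_min (hf : BddBelow (Set.range f)) (u : ℕ) :
    tailMin f u = min (f u) (tailMin f (u + 1)) := by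
  refine le_antisymm (le_min (tailMin_le hf le_rfl) (le_tailMin fun v hv ↦ tailMin_le hf ?_))
    (le_tailMin fun v hv ↦ ?_)
  · omega
  · rcases hv.eq_or_lt with rfl | hlt
    · exact min_le_left _ _
    · exact (min_le_right _ _).trans (tailMin_le hf hlt)

lemma tailMin_succ_of_forall_lt (hf : BddBelow (Set.range f)) {u : ℕ}
    (hstep : f (u + 1) ≤ f u + 1) (hrec : ∀ v, u < v → f u < f v) :
    tailMin f (u + 1) = tailMin f u + 1 := by
  have hnext : tailMin f (u + 1) = f u + 1 :=
    le_antisymm ((tailMin_le hf le_rfl).trans hstep) (le_tailMin fun v hv ↦ hrec v hv)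
  rw [tailMin_eq_min hf u, hnext, min_eq_left (le_add_of_nonneg_right zero_le_one)]

lemma tailMin_succ_of_exists_le (hf : BddBelow (Set.range f)) {u : ℕ}
    (h : ∃ v, u < v ∧ f v ≤ f u) : tailMin f (u + 1) = tailMin f u := by
  obtain ⟨v, huv, hv⟩ := h
  rw [tailMin_eq_min hf u, min_eq_right ((tailMin_le hf huv).trans hv)]

open Classical in
lemma sum_Icc_ite_forall_lt_eq_tailMin_sub (hf : BddBelow (Set.range f))
    (hstep : ∀ u, f (u + 1) ≤ f u + 1) (n : ℕ) :
    ∑ u ∈ Finset.Icc 1 n, (if ∀ v, u < v → f u < f v then (1 : ℤ) else 0) =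
      tailMin f (n + 1) - tailMin f 1 := by
  induction n with
  | zero => simp
  | succ n ih =>
    rw [Finset.sum_Icc_succ_top (by omega), ih]
    split_ifs with hrec
    · rw [tailMin_succ_of_forall_lt hf (hstep _) hrec]; ring
    · push Not at hrec
      rw [tailMin_succ_of_exists_le hf hrec]; ring

section Drift

variable {t : ℕ} {d : ℤ} (hdrift : ∀ u, f (u + t) = f u + d)
include hdrift

lemma apply_add_mul_of_drift (u k : ℕ) : f (u + t * k) = f u + k * d := by
  induction k with
  | zero => simp
  | succ k ih => rw [mul_add_one, ← add_assoc, hdrift, ih]; push_cast; ring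

lemma bddBelow_range_of_drift (ht : 0 < t) (hd : 0 ≤ d) : BddBelow (Set.range f) := by
  obtain ⟨b, hb⟩ := ((Set.finite_Iio t).image f).bddBelow
  refine ⟨b, ?_⟩
  rintro _ ⟨v, rfl⟩
  have hv := apply_add_mul_of_drift hdrift (v % t) (v / t)
  rw [Nat.mod_add_div] at hv
  have := hb ⟨v % t, Nat.mod_lt v ht, rfl⟩
  nlinarith [(v / t : ℕ).cast_nonneg (α := ℤ)]

lemma tailMin_add_of_drift (hf : BddBelow (Set.range f)) (u : ℕ) :
    tailMin f (u + t) = tailMin f u + d := by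
  obtain ⟨w, huw, hw⟩ := exists_eq_tailMin hf u
  refine le_antisymm ?_ (le_tailMin fun v hv ↦ ?_)
  · rw [← hw, ← hdrift]
    exact tailMin_le hf (by omega)
  · have hsplit := hdrift (v - t)
    rw [Nat.sub_add_cancel (by omega)] at hsplit
    linarith [tailMin_le hf (show u ≤ v - t by omega)]

end Drift

end Takacs

open Takacs

open Classical in

theorem takacs_deterministic_lemma_general
    (t : ℕ) (ht : 1 ≤ t) (φ : ℕ → ℕ) (hmono : Monotone φ)
    (hadd : ∀ u : ℕ, φ (t + u) = φ t + φ u)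
    (δ : ℕ → ℕ)
    (hδ : ∀ u : ℕ, δ u =
      if ∀ v : ℕ, u < v → (u : ℤ) - (φ u : ℤ) < (v : ℤ) - (φ v : ℤ) then 1 else 0) :
    (φ t ≤ t → (∑ u ∈ Finset.Icc 1 t, δ u) = t - φ t) ∧
    (t ≤ φ t → (∑ u ∈ Finset.Icc 1 t, δ u) = 0) := by
  set f : ℕ → ℤ := fun u ↦ (u : ℤ) - φ u
  have hdrift : ∀ u, f (u + t) = f u + ((t : ℤ) - φ t) := fun u ↦ by
    simp only [f, add_comm u t, hadd]; push_cast; ring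
  have hstep : ∀ u, f (u + 1) ≤ f u + 1 := fun u ↦ by
    have := hmono (Nat.le_add_right u 1); simp only [f]; push_cast; omega
  constructor
  · intro hφt
    have hf := bddBelow_range_of_drift hdrift ht (by omega)
    have hsum := sum_Icc_ite_forall_lt_eq_tailMin_sub hf hstep t
    rw [add_comm t, tailMin_add_of_drift hdrift hf, add_sub_cancel_left] at hsum
    zify [hφt]
    simpa only [hδ, Nat.cast_ite, Nat.cast_one, Nat.cast_zero] using hsum
  · intro htφ
    refine Finset.sum_eq_zero fun u _ ↦ ?_
    rw [hδ, if_neg]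
    push Not
    exact ⟨u + t, by omega, by have := hdrift u; simp only [f] at this; omega⟩

open Classical in
/-- Takács' deterministic lemma: for a nondecreasing additive-type function `φ`
with `φ 0 = 0` and `φ (t + u) = φ t + φ u`, the number of indices
`u ∈ {1, …, t}` such that `v - φ v > u - φ u` for every `v > u` equals
`t - φ t` if `φ t ≤ t` and `0` if `φ t ≥ t`. -/
theorem takacs_deterministic_lemma
    (t : ℕ) (ht : 1 ≤ t) (φ : ℕ → ℕ) (hmono : Monotone φ) (h0 : φ 0 = 0)
    (hadd : ∀ u : ℕ, φ (t + u) = φ t + φ u)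
    (δ : ℕ → ℕ)
    (hδ : ∀ u : ℕ, δ u =
      if ∀ v : ℕ, u < v → (u : ℤ) - (φ u : ℤ) < (v : ℤ) - (φ v : ℤ) then 1 else 0) :
    (φ t ≤ t → (∑ u ∈ Finset.Icc 1 t, δ u) = t - φ t) ∧
    (t ≤ φ t → (∑ u ∈ Finset.Icc 1 t, δ u) = 0) :=
  takacs_deterministic_lemma_general t ht φ hmono hadd δ hδ
end

section
/- (Kemperman's formula for cyclically interchangeable increments.) Let n ≥ 1 and let ξ₁, …, ξₙ be cyclically interchangeable integer-valued random variables with ξᵢ ≥ −1 almost surely. Let R(j) = ξ₁ + ⋯ + ξⱼ for 1 ≤ j ≤ n, R(0) = 0, and for an integer k ≥ 1 let T_{−k} = min{ j ≥ 1 : R(j) = −k } be the first time the walk reaches level −k. Then for every integer k with 1 ≤ k ≤ n such that P(R(n) = −k) > 0, one has n · P(T_{−k} = n | R(n) = −k) = k. -/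
/-!
Extend the increments `n`-periodically to a walk `S` on `ℕ`. If the total is `-k`, then
`S (n + i) = S i - k`, and the rotation starting at `r` first reaches `-k` at time `n` exactly when
`S` stays above `S r - k` on `[r, r + n)`. Because `S` moves down only by unit steps, these `r` are
the first passage times of `S` to the levels `m, …, m + k - 1`, where `m` is the minimum of `S` on
`[0, n)`; so exactly `k` of the `n` rotations are good (the cycle lemma). Every rotation of `ξ` has
the law of `ξ`, so averaging over rotations gives `n P(T₋ₖ = n) = k P(R n = -k)`.
-/

open Finset MeasureTheory ProbabilityTheory
open scoped ENNReal

namespace SkipFree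

variable {S : ℕ → ℤ} {a b n k : ℕ} {c : ℤ}

theorem exists_eq_of_le_of_le (hS : ∀ m, S m - 1 ≤ S (m + 1)) (hab : a ≤ b) (ha : c ≤ S a)
    (hb : S b ≤ c) : ∃ i, a ≤ i ∧ i ≤ b ∧ S i = c := by
  induction b, hab using Nat.le_induction with
  | base => exact ⟨a, le_rfl, le_rfl, le_antisymm hb ha⟩
  | succ b hab ih =>
    by_cases hc : S b ≤ c
    · obtain ⟨i, hai, hib, hi⟩ := ih hc
      exact ⟨i, hai, hib.trans b.le_succ, hi⟩
    · exact ⟨b + 1, hab.trans b.le_succ, le_rfl, le_antisymm hb (by linarith [hS b])⟩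

theorem lt_of_forall_ne (hS : ∀ m, S m - 1 ≤ S (m + 1)) (hab : a ≤ b) (ha : c ≤ S a)
    (hne : ∀ i, a ≤ i → i ≤ b → S i ≠ c) : c < S b := by
  by_contra! hb
  obtain ⟨i, hai, hib, hi⟩ := exists_eq_of_le_of_le hS hab ha hb
  exact hne i hai hib hi

theorem forall_ne_iff_forall_lt (hS : ∀ m, S m - 1 ≤ S (m + 1)) (hk : 0 < k) (r : ℕ) :
    (∀ j, 1 ≤ j → j < n → S (r + j) ≠ S r - k) ↔ ∀ j < n, S r - k < S (r + j) := by
  refine ⟨fun h j hj => lt_of_forall_ne hS (Nat.le_add_right r j) (by omega) fun i hri hij => ?_,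
    fun h j _ hj => (h j hj).ne'⟩
  obtain ⟨d, rfl⟩ := Nat.exists_eq_add_of_le hri
  rcases Nat.eq_zero_or_pos d with rfl | hd
  · simp only [Nat.add_zero]; omega
  · exact h d hd (by omega)

theorem lt_of_lt_of_forall_lt_add (hper : ∀ i, S (n + i) = S i - k) {r i : ℕ}
    (hr : r < n) (hgood : ∀ j < n, S r - k < S (r + j)) (hi : i < r) : S r < S i := by
  have := hgood (n + i - r) (by omega)
  rw [show r + (n + i - r) = n + i by omega, hper] at this
  omega

theorem exists_forall_lt_add (hS : ∀ m, S m - 1 ≤ S (m + 1)) (h0 : S 0 = 0)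
    (hper : ∀ i, S (n + i) = S i - k) {m : ℕ} (hm : m < n) (hmin : ∀ i < n, S m ≤ S i) {v : ℤ}
    (hmv : S m ≤ v) (hv0 : v ≤ 0) (hvk : v < S m + k) :
    ∃ r < n, S r = v ∧ ∀ j < n, S r - k < S (r + j) := by
  obtain ⟨i, -, him, hi⟩ := exists_eq_of_le_of_le hS (Nat.zero_le m) (h0 ▸ hv0) hmv
  have hex : ∃ i, S i = v := ⟨i, hi⟩
  classical
  have hfirst : ∀ i < Nat.find hex, v < S i := fun i hi =>
    lt_of_forall_ne hS (Nat.zero_le i) (h0 ▸ hv0) fun i' _ hi' => Nat.find_min hex (by omega)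
  refine ⟨Nat.find hex, (Nat.find_min' hex hi).trans_lt (him.trans_lt hm), Nat.find_spec hex,
    fun j hj => ?_⟩
  rw [Nat.find_spec hex]
  rcases lt_or_ge (Nat.find hex + j) n with hlt | hge
  · linarith [hmin _ hlt]
  · rw [show Nat.find hex + j = n + (Nat.find hex + j - n) by omega, hper]
    linarith [hfirst (Nat.find hex + j - n) (by omega)]

theorem card_filter_forall_lt_add (hS : ∀ m, S m - 1 ≤ S (m + 1)) (h0 : S 0 = 0) (hk : 0 < k)
    (hper : ∀ i, S (n + i) = S i - k) : #{r ∈ range n | ∀ j < n, S r - k < S (r + j)} = k := by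
  have hn : 0 < n := Nat.pos_of_ne_zero fun h => by
    have := hper 0
    simp only [h, Nat.add_zero] at this
    omega
  obtain ⟨m, hm, hmin⟩ := exists_min_image (range n) S ⟨0, mem_range.2 hn⟩
  rw [mem_range] at hm
  have hmin' : ∀ i < n, S m ≤ S i := fun i hi => hmin i (mem_range.2 hi)
  have hlow : S m + k ≤ 1 := by
    have := hS (n - 1)
    rw [show n - 1 + 1 = n + 0 by omega, hper, h0] at this
    linarith [hmin' (n - 1) (by omega)]
  conv_rhs => rw [show k = #(Icc (S m) (S m + k - 1)) by simp]
  refine card_bij (fun r _ => S r) (fun r hr => ?_) (fun r₁ hr₁ r₂ hr₂ h => ?_) (fun v hv => ?_)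
  · simp only [mem_filter, mem_range] at hr
    rw [mem_Icc]
    refine ⟨hmin' r hr.1, ?_⟩
    rcases le_or_gt r m with hrm | hmr
    · have := hr.2 (m - r) (by omega)
      rw [Nat.add_sub_cancel' hrm] at this
      omega
    · linarith [lt_of_lt_of_forall_lt_add hper hr.1 hr.2 hmr]
  · simp only [mem_filter, mem_range] at hr₁ hr₂
    by_contra hne
    rcases Nat.lt_or_gt_of_ne hne with h12 | h21
    · exact (lt_of_lt_of_forall_lt_add hper hr₂.1 hr₂.2 h12).ne' h
    · exact (lt_of_lt_of_forall_lt_add hper hr₁.1 hr₁.2 h21).ne h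
  · rw [mem_Icc] at hv
    obtain ⟨r, hr, hSr, hgood⟩ :=
      exists_forall_lt_add hS h0 hper hm hmin' hv.1 (by omega) (by omega)
    exact ⟨r, mem_filter.2 ⟨mem_range.2 hr, hgood⟩, hSr⟩

end SkipFree

namespace CycleLemma

open Fin.NatCast

variable {n : ℕ}

def partialSum (x : Fin n → ℤ) (j : ℕ) : ℤ := ∑ l : Fin n, if (l : ℕ) < j then x l else 0

def rotate (x : Fin n → ℤ) (r : Fin n) : Fin n → ℤ := fun i => x (i + r)

def FirstHitsAtEnd (k : ℕ) (x : Fin n → ℤ) : Prop :=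
  partialSum x n = -k ∧ ∀ j, 1 ≤ j → j < n → partialSum x j ≠ -k

theorem partialSum_self (x : Fin n → ℤ) : partialSum x n = ∑ i, x i :=
  sum_congr rfl fun l _ => if_pos l.isLt

theorem partialSum_rotate_self (x : Fin n → ℤ) (r : Fin n) :
    partialSum (rotate x r) n = ∑ i, x i :=
  have : NeZero n := ⟨r.pos.ne'⟩
  (partialSum_self _).trans (Fintype.sum_equiv (Equiv.addRight r) _ _ fun _ => rfl)

section

variable [NeZero n]

theorem partialSum_eq_sum_range (x : Fin n → ℤ) {j : ℕ} (hj : j ≤ n) :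
    partialSum x j = ∑ m ∈ range j, x m := by
  have := Fin.sum_univ_eq_sum_range (fun m => if m < j then x m else 0) n
  simp only [Fin.cast_val_eq_self] at this
  rw [partialSum, this, ← sum_filter]
  congr 1
  ext m
  simp only [mem_filter, mem_range]
  omega

def periodicWalk (x : Fin n → ℤ) (j : ℕ) : ℤ := ∑ m ∈ range j, x m

theorem periodicWalk_succ_ge (x : Fin n → ℤ) (hx : ∀ i, -1 ≤ x i) (m : ℕ) :
    periodicWalk x m - 1 ≤ periodicWalk x (m + 1) := by
  rw [periodicWalk, periodicWalk, sum_range_succ]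
  linarith [hx m]

theorem periodicWalk_add_left (x : Fin n → ℤ) (i : ℕ) :
    periodicWalk x (n + i) = periodicWalk x i + ∑ l, x l := by
  simp only [periodicWalk, sum_range_add, Nat.cast_add, Fin.natCast_self, zero_add]
  rw [add_comm, ← Fin.sum_univ_eq_sum_range (fun m => x m) n]
  simp only [Fin.cast_val_eq_self]

theorem partialSum_rotate (x : Fin n → ℤ) (r : Fin n) {j : ℕ} (hj : j ≤ n) :
    partialSum (rotate x r) j = periodicWalk x (r + j) - periodicWalk x r := by
  rw [partialSum_eq_sum_range _ hj, periodicWalk, periodicWalk, sum_range_add, add_sub_cancel_left]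
  refine sum_congr rfl fun m _ => ?_
  simp [rotate, add_comm]

end

open Classical in
theorem card_rotate_firstHitsAtEnd {k : ℕ} {x : Fin n → ℤ} (hx : ∀ i, -1 ≤ x i) (hk : 0 < k)
    (hs : ∑ i, x i = -k) : #{r | FirstHitsAtEnd k (rotate x r)} = k := by
  have : NeZero n := ⟨by rintro rfl; simp at hs; omega⟩
  have hS := periodicWalk_succ_ge x hx
  have hgood : ∀ r : Fin n, FirstHitsAtEnd k (rotate x r) ↔
      ∀ j < n, periodicWalk x r - k < periodicWalk x (r + j) := by
    intro r
    rw [← SkipFree.forall_ne_iff_forall_lt hS hk, FirstHitsAtEnd, partialSum_rotate_self, hs]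
    simp only [true_and]
    refine forall_congr' fun j => imp_congr_right fun _ => forall_congr' fun hj => ?_
    rw [partialSum_rotate x r hj.le]
    omega
  simp only [hgood]
  rw [card_filter, Fin.sum_univ_eq_sum_range
    (fun r => if ∀ j < n, periodicWalk x r - k < periodicWalk x (r + j) then 1 else 0) n,
    ← card_filter]
  exact SkipFree.card_filter_forall_lt_add hS (by simp [periodicWalk]) hk fun i => by
    rw [periodicWalk_add_left, hs]; ring

open Classical in
theorem card_rotate_firstHitsAtEnd_of_ne {k : ℕ} {x : Fin n → ℤ} (hs : ∑ i, x i ≠ -k) :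
    #{r | FirstHitsAtEnd k (rotate x r)} = 0 :=
  card_eq_zero.2 <| filter_false_of_mem fun r _ hr =>
    hs ((partialSum_rotate_self x r).symm.trans hr.1)

end CycleLemma

open Classical in
theorem card_mul_measure_eq_lintegral_card {α ι : Type*} [MeasurableSpace α] [Fintype ι]
    {ν : Measure α} {σ : ι → α → α} (hσ : ∀ r, MeasurePreserving (σ r) ν ν) {G : Set α}
    (hG : MeasurableSet G) : Fintype.card ι * ν G = ∫⁻ x, #{r | σ r x ∈ G} ∂ν := by
  calc Fintype.card ι * ν G = ∑ r, ν (σ r ⁻¹' G) := by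
        simp [(hσ _).measure_preimage hG.nullMeasurableSet]
    _ = ∑ r, ∫⁻ x, (σ r ⁻¹' G).indicator 1 x ∂ν := by
        simp [lintegral_indicator_one ((hσ _).measurable hG)]
    _ = ∫⁻ x, #{r | σ r x ∈ G} ∂ν := by
        rw [← lintegral_finsetSum _ fun r _ => measurable_one.indicator ((hσ r).measurable hG)]
        refine lintegral_congr fun x => ?_
        rw [card_filter, Nat.cast_sum]
        exact sum_congr rfl fun r _ => by simp [Set.indicator_apply]

theorem mul_cond_eq_of_mul_measure_eq {Ω : Type*} [MeasurableSpace Ω] {μ : Measure Ω}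
    [IsFiniteMeasure μ] {s t : Set Ω} {a b : ℝ≥0∞} (hs : MeasurableSet s) (hts : t ⊆ s)
    (hμs : μ s ≠ 0) (h : a * μ t = b * μ s) : a * μ[t | s] = b := by
  rw [cond_apply hs, Set.inter_eq_self_of_subset_right hts, mul_left_comm, h, mul_left_comm,
    ENNReal.inv_mul_cancel hμs (measure_ne_top _ _), mul_one]

open CycleLemma in
theorem kemperman_cyclically_interchangeable_general
    {Ω : Type*} [MeasurableSpace Ω] (μ : Measure Ω) [IsProbabilityMeasure μ]
    (n : ℕ) (ξ : Fin n → Ω → ℤ)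
    (hmeas : ∀ i, Measurable (ξ i))
    (hbound : ∀ i, ∀ᵐ ω ∂μ, -1 ≤ ξ i ω)
    (hcyc : ∀ r : Fin n,
      Measure.map (fun ω => fun i : Fin n => ξ (i + r) ω) μ
        = Measure.map (fun ω => fun i : Fin n => ξ i ω) μ)
    (R : ℕ → Ω → ℤ)
    (hR : ∀ j ω, R j ω = ∑ l : Fin n, if (l : ℕ) < j then ξ l ω else 0)
    (k : ℕ) (hk1 : 1 ≤ k)
    (hpos : μ {ω | R n ω = -(k : ℤ)} ≠ 0) :
    (n : ENNReal) *
      μ[{ω | R n ω = -(k : ℤ) ∧ ∀ j : ℕ, 1 ≤ j → j < n → R j ω ≠ -(k : ℤ)} |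
        {ω | R n ω = -(k : ℤ)}] = (k : ENNReal) := by
  classical
  set Φ : Ω → Fin n → ℤ := fun ω i => ξ i ω
  have hΦ : Measurable Φ := measurable_pi_lambda _ hmeas
  set G := {x : Fin n → ℤ | FirstHitsAtEnd k x}
  set B := {x : Fin n → ℤ | ∑ i, x i = -k}
  have hG : {ω | R n ω = -k ∧ ∀ j, 1 ≤ j → j < n → R j ω ≠ -k} = Φ ⁻¹' G := by
    ext ω; simp only [hR]; rfl
  have hB : {ω | R n ω = -k} = Φ ⁻¹' B := by
    ext ω; simp only [hR]; exact iff_of_eq (congrArg (· = -(k : ℤ)) (partialSum_self (Φ ω)))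
  have hrot : ∀ r, MeasurePreserving (rotate · r) (μ.map Φ) (μ.map Φ) := fun r =>
    ⟨.of_discrete, by rw [Measure.map_map .of_discrete hΦ]; exact hcyc r⟩
  have hcount : ∀ᵐ x ∂μ.map Φ,
      (#{r | rotate x r ∈ G} : ℝ≥0∞) = B.indicator (fun _ => (k : ℝ≥0∞)) x := by
    filter_upwards [(ae_map_iff (p := fun x => ∀ i, -1 ≤ x i) hΦ.aemeasurable .of_discrete).2
      (ae_all_iff.2 hbound)] with x hx
    by_cases hxB : x ∈ B
    · rw [Set.indicator_of_mem hxB]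
      exact congrArg Nat.cast (card_rotate_firstHitsAtEnd hx hk1 hxB)
    · rw [Set.indicator_of_notMem hxB]
      exact (congrArg Nat.cast (card_rotate_firstHitsAtEnd_of_ne hxB)).trans Nat.cast_zero
  have hcard := card_mul_measure_eq_lintegral_card hrot (.of_discrete (s := G))
  rw [Fintype.card_fin, lintegral_congr_ae hcount, lintegral_indicator_const .of_discrete,
    Measure.map_apply hΦ .of_discrete, Measure.map_apply hΦ .of_discrete] at hcard
  rw [hB] at hpos
  rw [hG, hB]
  exact mul_cond_eq_of_mul_measure_eq (hΦ .of_discrete)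
    (Set.preimage_mono fun x hx => (partialSum_self x).symm.trans hx.1) hpos hcard

/-- Kemperman's formula for cyclically interchangeable increments: if the
increments are integer-valued, `≥ -1` a.s., and cyclically interchangeable,
then conditionally on `R n = -k` (with `1 ≤ k ≤ n`), the probability that the
first hitting time of level `-k` equals `n` is `k / n`. -/
theorem kemperman_cyclically_interchangeable
    {Ω : Type*} [MeasurableSpace Ω] (μ : Measure Ω) [IsProbabilityMeasure μ]
    (n : ℕ) (hn : 1 ≤ n) (ξ : Fin n → Ω → ℤ)
    (hmeas : ∀ i, Measurable (ξ i))
    (hbound : ∀ i, ∀ᵐ ω ∂μ, -1 ≤ ξ i ω)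
    (hcyc : ∀ r : Fin n,
      Measure.map (fun ω => fun i : Fin n => ξ (i + r) ω) μ
        = Measure.map (fun ω => fun i : Fin n => ξ i ω) μ)
    (R : ℕ → Ω → ℤ)
    (hR : ∀ j ω, R j ω = ∑ l : Fin n, if (l : ℕ) < j then ξ l ω else 0)
    (k : ℕ) (hk1 : 1 ≤ k) (hkn : k ≤ n)
    (hpos : μ {ω | R n ω = -(k : ℤ)} ≠ 0) :
    (n : ENNReal) *
      μ[{ω | R n ω = -(k : ℤ) ∧ ∀ j : ℕ, 1 ≤ j → j < n → R j ω ≠ -(k : ℤ)} |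
        {ω | R n ω = -(k : ℤ)}] = (k : ENNReal) :=
  kemperman_cyclically_interchangeable_general μ n ξ hmeas hbound hcyc R hR k hk1 hpos
end
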